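/- arXiv:2304.12429 — 3 statements merged into one kernel-verified Lean document; each statement's English description precedes it below -/
import Mathlib

section
/- The multinomial cross-entropy component loss L(W) = Σ_{k=1}^K -y_k log softmax(Wx)_k is 2-Lipschitz in W with respect to the entrywise L1 norm, when ‖x‖_∞ ≤ 1 and y is a one-hot vector. -/
noncomputable def softmax {K : ℕ} (z : Fin K → ℝ) (k : Fin K) : ℝ :=
  Real.exp (z k) / ∑ j, Real.exp (z j)

lemma sum_exp_pos {K : ℕ} (k0 : Fin K) (z : Fin K → ℝ) :
    0 < ∑ j, Real.exp (z j) :=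
  Finset.sum_pos (fun j _ => Real.exp_pos _) ⟨k0, Finset.mem_univ _⟩

lemma lse_le {K : ℕ} (k0 : Fin K) (a b : Fin K → ℝ) (c : ℝ)
    (h : ∀ k, a k ≤ b k + c) :
    Real.log (∑ j, Real.exp (a j)) - Real.log (∑ j, Real.exp (b j)) ≤ c := by
  have hb := sum_exp_pos k0 b
  have ha := sum_exp_pos k0 a
  have h1 : ∑ j, Real.exp (a j) ≤ Real.exp c * ∑ j, Real.exp (b j) := by
    rw [Finset.mul_sum]
    refine Finset.sum_le_sum fun j _ => ?_
    rw [← Real.exp_add]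
    exact Real.exp_le_exp.mpr (by linarith [h j])
  have := Real.log_le_log ha h1
  rw [Real.log_mul (Real.exp_ne_zero _) hb.ne', Real.log_exp] at this
  linarith

lemma L_eq {K p : ℕ} (x : Fin p → ℝ) (y : Fin K → ℝ)
    (kstar : Fin K) (hy1 : y kstar = 1) (hy0 : ∀ k, k ≠ kstar → y k = 0)
    (z : Fin K → ℝ) :
    ∑ k, -(y k * Real.log (softmax z k))
      = Real.log (∑ j, Real.exp (z j)) - z kstar := by
  have hS := sum_exp_pos kstar z
  rw [Finset.sum_eq_single kstar]
  · rw [hy1, one_mul, softmax, Real.log_div (Real.exp_ne_zero _) hS.ne',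
      Real.log_exp]
    ring
  · intro k _ hk; rw [hy0 k hk]; ring
  · intro h; exact absurd (Finset.mem_univ kstar) h

theorem multinomial_ce_lipschitz (K p : ℕ) (x : Fin p → ℝ) (y : Fin K → ℝ)
    (hx : ∀ i, |x i| ≤ 1)
    (kstar : Fin K) (hy1 : y kstar = 1) (hy0 : ∀ k, k ≠ kstar → y k = 0)
    (L : (Fin K → Fin p → ℝ) → ℝ)
    (hL : ∀ W, L W = ∑ k, -(y k * Real.log (softmax (fun k' => ∑ j, W k' j * x j) k))) :
    ∀ W₁ W₂ : Fin K → Fin p → ℝ,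
      |L W₁ - L W₂| ≤ 2 * ∑ k, ∑ j, |W₁ k j - W₂ k j| := by
  intro W₁ W₂
  set z₁ : Fin K → ℝ := fun k => ∑ j, W₁ k j * x j with hz₁
  set z₂ : Fin K → ℝ := fun k => ∑ j, W₂ k j * x j with hz₂
  set S : ℝ := ∑ k, ∑ j, |W₁ k j - W₂ k j| with hS
  -- pointwise bound on z differences
  have hz : ∀ k, |z₁ k - z₂ k| ≤ ∑ j, |W₁ k j - W₂ k j| := by
    intro k
    have : z₁ k - z₂ k = ∑ j, (W₁ k j - W₂ k j) * x j := by
      simp [hz₁, hz₂, ← Finset.sum_sub_distrib, sub_mul]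
    rw [this]
    calc |∑ j, (W₁ k j - W₂ k j) * x j| ≤ ∑ j, |(W₁ k j - W₂ k j) * x j| :=
          Finset.abs_sum_le_sum_abs _ _
      _ ≤ ∑ j, |W₁ k j - W₂ k j| := by
          refine Finset.sum_le_sum fun j _ => ?_
          rw [abs_mul]
          calc |W₁ k j - W₂ k j| * |x j| ≤ |W₁ k j - W₂ k j| * 1 :=
                mul_le_mul_of_nonneg_left (hx j) (abs_nonneg _)
            _ = _ := mul_one _
  have hterm_nonneg : ∀ k ∈ Finset.univ, (0:ℝ) ≤ ∑ j, |W₁ k j - W₂ k j| :=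
    fun k _ => Finset.sum_nonneg fun j _ => abs_nonneg _
  have hkS : ∀ k, |z₁ k - z₂ k| ≤ S :=
    fun k => (hz k).trans (Finset.single_le_sum hterm_nonneg (Finset.mem_univ k))
  have hC : ∀ k, z₁ k ≤ z₂ k + S := fun k => by
    have := (abs_le.mp (hkS k)).2; linarith
  have hC' : ∀ k, z₂ k ≤ z₁ k + S := fun k => by
    have := (abs_le.mp (hkS k)).1; linarith
  have h1 := lse_le kstar z₁ z₂ S hC
  have h2 := lse_le kstar z₂ z₁ S hC'
  have hk := abs_le.mp (hkS kstar)
  rw [hL W₁, hL W₂, L_eq x y kstar hy1 hy0 z₁, L_eq x y kstar hy1 hy0 z₂]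
  rw [abs_le]
  constructor <;> [nlinarith [hk.1, hk.2, h1, h2]; nlinarith [hk.1, hk.2, h1, h2]]
end

section
/- Let ŵ_P ∈ ℝ^p with ‖ŵ_P‖₁ ≤ λ, and let ŵ be obtained by keeping the c largest-in-absolute-value components of ŵ_P and zeroing the rest. Then the (c+1)-th largest absolute component of ŵ_P is at most λ/(c+1), and consequently ‖ŵ - ŵ_P‖₁ ≤ (p - c)·λ/(c+1). -/
theorem hard_threshold_l1_bound (p c : ℕ) (hc : c < p) (wP : Fin p → ℝ)
    (lam : ℝ) (hwP : ∑ i, |wP i| ≤ lam)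
    (π : Equiv.Perm (Fin p))
    (hsorted : ∀ i j : Fin p, i ≤ j → |wP (π j)| ≤ |wP (π i)|)
    (w : Fin p → ℝ)
    (hw : ∀ i, w i = if ((π.symm i : Fin p) : ℕ) < c then wP i else 0) :
    |wP (π ⟨c, hc⟩)| ≤ lam / (c + 1) ∧
      ∑ i, |w i - wP i| ≤ ((p : ℝ) - c) * lam / (c + 1) := by
  set a : Fin p := ⟨c, hc⟩ with ha
  set B : ℝ := |wP (π a)| with hB
  have hBnn : 0 ≤ B := abs_nonneg _
  have hsum_comp : ∑ k, |wP (π k)| = ∑ i, |wP i| :=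
    Equiv.sum_comp π (fun i => |wP i|)
  have key : (c + 1 : ℝ) * B ≤ lam := by
    have h1 : ∑ k ∈ Finset.Iic a, B ≤ ∑ k ∈ Finset.Iic a, |wP (π k)| := by
      apply Finset.sum_le_sum
      intro k hk
      exact hsorted k a (Finset.mem_Iic.mp hk)
    have h2 : ∑ k ∈ Finset.Iic a, |wP (π k)| ≤ ∑ k, |wP (π k)| := by
      apply Finset.sum_le_sum_of_subset_of_nonneg (Finset.subset_univ _)
      intro k _ _; exact abs_nonneg _
    have hcard : (Finset.Iic a).card = c + 1 := by
      rw [Fin.card_Iic]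
    have : ((c : ℝ) + 1) * B ≤ ∑ i, |wP i| := by
      calc ((c : ℝ) + 1) * B = ∑ k ∈ Finset.Iic a, B := by
            rw [Finset.sum_const, hcard]; push_cast; ring
        _ ≤ ∑ k ∈ Finset.Iic a, |wP (π k)| := h1
        _ ≤ ∑ k, |wP (π k)| := h2
        _ = ∑ i, |wP i| := hsum_comp
    linarith
  have hc1 : (0 : ℝ) < (c : ℝ) + 1 := by positivity
  have hBle : B ≤ lam / (c + 1) := by
    rw [le_div_iff₀ hc1]; linarith [key]
  refine ⟨hBle, ?_⟩
  have hsum2 : ∑ i, |w i - wP i| = ∑ k, |w (π k) - wP (π k)| :=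
    (Equiv.sum_comp π (fun i => |w i - wP i|)).symm
  have hterm : ∀ k : Fin p, |w (π k) - wP (π k)| ≤ if (k : ℕ) < c then 0 else B := by
    intro k
    rw [hw (π k), Equiv.symm_apply_apply]
    by_cases hk : (k : ℕ) < c
    · simp [hk]
    · simp only [hk, if_false]
      rw [zero_sub, abs_neg]
      exact hsorted a k (by simpa [ha, Fin.le_def] using Nat.le_of_not_lt hk)
  have hsum3 : ∑ k : Fin p, (if (k : ℕ) < c then (0:ℝ) else B) = ((p : ℝ) - c) * B := by
    rw [Finset.sum_ite, Finset.sum_const_zero, Finset.sum_const, zero_add]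
    have : (Finset.univ.filter (fun k : Fin p => ¬ (k : ℕ) < c)) = Finset.Ici a := by
      ext k
      simp [ha, Fin.le_def, Nat.not_lt]
    rw [this, Fin.card_Ici]
    simp only [ha, nsmul_eq_mul]
    rw [Nat.cast_sub hc.le]
  calc ∑ i, |w i - wP i| = ∑ k, |w (π k) - wP (π k)| := hsum2
    _ ≤ ∑ k : Fin p, (if (k : ℕ) < c then (0:ℝ) else B) :=
        Finset.sum_le_sum (fun k _ => hterm k)
    _ = ((p : ℝ) - c) * B := hsum3
    _ ≤ ((p : ℝ) - c) * lam / (c + 1) := by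
        rw [mul_div_assoc]
        apply mul_le_mul_of_nonneg_left hBle
        have : (c : ℝ) < p := by exact_mod_cast hc
        linarith
end

section
/- If L: ℝ^p → ℝ is L-Lipschitz with respect to the L1 norm, ‖ŵ_P‖₁ ≤ λ, and ŵ is the hard-thresholded vector keeping the top c ≥ α components of ŵ_P, then |L(ŵ) - L(ŵ_P)| ≤ L·λ·min{(p-α)/(α+1), 1}. -/
theorem sparsifier_loss_bias_bound (p c : ℕ) (hc : c < p) (α : ℝ)
    (hα : 0 ≤ α) (hαc : α ≤ c)
    (Lf : (Fin p → ℝ) → ℝ) (Lc : ℝ)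
    (hlip : ∀ u v : Fin p → ℝ, |Lf u - Lf v| ≤ Lc * ∑ i, |u i - v i|)
    (wP : Fin p → ℝ) (lam : ℝ) (hwP : ∑ i, |wP i| ≤ lam)
    (π : Equiv.Perm (Fin p))
    (hsorted : ∀ i j : Fin p, i ≤ j → |wP (π j)| ≤ |wP (π i)|)
    (w : Fin p → ℝ)
    (hw : ∀ i, w i = if ((π.symm i : Fin p) : ℕ) < c then wP i else 0) :
    |Lf w - Lf wP| ≤ Lc * lam * min (((p : ℝ) - α) / (α + 1)) 1 := by
  have hp0 : 0 < p := lt_of_le_of_lt (Nat.zero_le c) hc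
  set ic : Fin p := ⟨c, hc⟩ with hic
  set m : ℝ := |wP (π ic)| with hm
  have hm0 : 0 ≤ m := abs_nonneg _
  have hlam0 : 0 ≤ lam := le_trans (Finset.sum_nonneg fun i _ => abs_nonneg _) hwP
  have hperm : ∑ j : Fin p, |wP (π j)| = ∑ i, |wP i| := Equiv.sum_comp π (fun i => |wP i|)
  -- Lc is nonnegative
  have hLc : 0 ≤ Lc := by
    have h := hlip (fun j => if j = ⟨0, hp0⟩ then (1 : ℝ) else 0) (fun _ => 0)
    have hsum : (∑ j : Fin p, |(if j = (⟨0, hp0⟩ : Fin p) then (1:ℝ) else 0) - 0|) = 1 := by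
      simp [apply_ite abs]
    rw [hsum, mul_one] at h
    exact le_trans (abs_nonneg _) h
  -- rewrite the L1 distance as the tail sum
  have hT : ∑ i, |w i - wP i| = ∑ j ∈ Finset.Ici ic, |wP (π j)| := by
    have h1 : ∑ i, |w i - wP i| = ∑ j, |w (π j) - wP (π j)| :=
      (Equiv.sum_comp π (fun i => |w i - wP i|)).symm
    have h2 : ∀ j : Fin p, |w (π j) - wP (π j)| = if (j : ℕ) < c then 0 else |wP (π j)| := by
      intro j
      rw [hw (π j), Equiv.symm_apply_apply]
      split_ifs with h
      · simp
      · simp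
    have h3 : Finset.Ici ic = Finset.univ.filter (fun j : Fin p => ¬ (j : ℕ) < c) := by
      ext j
      simp only [Finset.mem_Ici, Finset.mem_filter, Finset.mem_univ, true_and, Fin.le_def,
        Nat.not_lt, hic]
    rw [h1, Finset.sum_congr rfl (fun j _ => h2 j), h3, Finset.sum_filter]
    exact Finset.sum_congr rfl fun j _ => by rw [ite_not]
  set T : ℝ := ∑ j ∈ Finset.Ici ic, |wP (π j)| with hTdef
  -- bound A : T ≤ lam
  have hA : T ≤ lam := by
    refine le_trans (Finset.sum_le_sum_of_subset_of_nonneg (Finset.subset_univ _)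
      (fun i _ _ => abs_nonneg _)) ?_
    rw [hperm]; exact hwP
  -- bound B : T ≤ (p - c) * m
  have hB : T ≤ ((p : ℝ) - c) * m := by
    have h := Finset.sum_le_card_nsmul (Finset.Ici ic) (fun j => |wP (π j)|) m
      (fun j hj => hsorted ic j (Finset.mem_Ici.mp hj))
    rw [Fin.card_Ici] at h
    have hcast : ((p - (ic : ℕ) : ℕ) : ℝ) = (p : ℝ) - c := by
      rw [Nat.cast_sub hc.le]
    calc T ≤ (p - (ic : ℕ)) • m := h
      _ = ((p - (ic : ℕ) : ℕ) : ℝ) * m := nsmul_eq_mul _ _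
      _ = ((p : ℝ) - c) * m := by rw [hcast]
  -- (c+1) * m ≤ lam
  have hCm : ((c : ℝ) + 1) * m ≤ lam := by
    have h1 := Finset.card_nsmul_le_sum (Finset.Iic ic) (fun j => |wP (π j)|) m
      (fun j hj => hsorted j ic (Finset.mem_Iic.mp hj))
    rw [Fin.card_Iic] at h1
    have h2 : ∑ j ∈ Finset.Iic ic, |wP (π j)| ≤ lam := by
      refine le_trans (Finset.sum_le_sum_of_subset_of_nonneg (Finset.subset_univ _)
        (fun i _ _ => abs_nonneg _)) ?_
      rw [hperm]; exact hwP
    have h3 := le_trans h1 h2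
    have : (((ic : ℕ) + 1 : ℕ) : ℝ) * m ≤ lam := by
      rw [← nsmul_eq_mul]; exact h3
    calc ((c : ℝ) + 1) * m = (((ic : ℕ) + 1 : ℕ) : ℝ) * m := by push_cast [hic]; ring
      _ ≤ lam := this
  have hcp : (c : ℝ) + 1 ≤ (p : ℝ) := by exact_mod_cast hc
  have hα1 : (0 : ℝ) < α + 1 := by linarith
  -- main arithmetic : T ≤ lam * min ((p-α)/(α+1)) 1
  have hmain : T ≤ lam * min (((p : ℝ) - α) / (α + 1)) 1 := by
    rcases le_total (((p : ℝ) - α) / (α + 1)) 1 with h | h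
    · rw [min_eq_left h, ← mul_div_assoc, le_div_iff₀ hα1]
      nlinarith [mul_le_mul_of_nonneg_right hB (le_of_lt hα1),
        mul_le_mul_of_nonneg_right hCm (by linarith : (0:ℝ) ≤ (p : ℝ) - α),
        mul_nonneg (mul_nonneg hm0 (sub_nonneg.mpr hαc)) (by positivity : (0:ℝ) ≤ (p:ℝ) + 1)]
    · rw [min_eq_right h, mul_one]; exact hA
  calc |Lf w - Lf wP| ≤ Lc * ∑ i, |w i - wP i| := hlip w wP
    _ = Lc * T := by rw [hT]
    _ ≤ Lc * (lam * min (((p : ℝ) - α) / (α + 1)) 1) := mul_le_mul_of_nonneg_left hmain hLc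
    _ = Lc * lam * min (((p : ℝ) - α) / (α + 1)) 1 := by ring
end
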